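/- Fix a prime power q and let d_1 ≤ d_2 ≤ ... ≤ d_k be a non-decreasing sequence of positive integers. Set m = d_1 + d_2 + ... + d_k and n = d_k. Then there exists a k-dimensional rank-metric code 𝒞 ⊆ F_q^{m×n} such that d_r(𝒞) = d_r for all r ∈ [k]. -/
import Mathlib


open Module

variable {F : Type*} [Field F] [Fintype F]

/-- The maximum rank of a subspace of the matrix space `F^{m×n}`. -/
noncomputable def maxrank {m n : ℕ} (𝒜 : Submodule F (Matrix (Fin m) (Fin n) F)) : ℕ :=
  sSup {w | ∃ A ∈ 𝒜, A.rank = w}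

/-- Optimal anticodes: subspaces `𝒜 ⊆ F^{m×n}` with `dim 𝒜 = m * maxrank 𝒜`. -/
def IsOptAnticode {m n : ℕ} (𝒜 : Submodule F (Matrix (Fin m) (Fin n) F)) : Prop :=
  Module.finrank F 𝒜 = m * maxrank 𝒜

/-- The weight of a subspace `𝒟 ⊆ F^{m×n}`: the minimum of `maxrank 𝒜` over optimal
anticodes `𝒜 ⊇ 𝒟`. -/
noncomputable def rkWt {m n : ℕ} (𝒟 : Submodule F (Matrix (Fin m) (Fin n) F)) : ℕ :=
  sInf {w | ∃ 𝒜 : Submodule F (Matrix (Fin m) (Fin n) F),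
    IsOptAnticode 𝒜 ∧ 𝒟 ≤ 𝒜 ∧ maxrank 𝒜 = w}

/-- The `r`-th generalized rank weight of a rank-metric code `𝒞 ⊆ F^{m×n}`. -/
noncomputable def grw {m n : ℕ} (𝒞 : Submodule F (Matrix (Fin m) (Fin n) F)) (r : ℕ) : ℕ :=
  sInf {w | ∃ 𝒟 : Submodule F (Matrix (Fin m) (Fin n) F),
    𝒟 ≤ 𝒞 ∧ r ≤ Module.finrank F 𝒟 ∧ rkWt 𝒟 = w}

set_option linter.unusedSectionVars false

section Aux

lemma rank_le_maxrank {m n : ℕ} {𝒜 : Submodule F (Matrix (Fin m) (Fin n) F)}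
    {A : Matrix (Fin m) (Fin n) F} (hA : A ∈ 𝒜) : A.rank ≤ maxrank 𝒜 := by
  refine le_csSup ⟨n, ?_⟩ ⟨A, hA, rfl⟩
  rintro w ⟨B, -, rfl⟩
  exact B.rank_le_width

lemma maxrank_le {m n : ℕ} {𝒜 : Submodule F (Matrix (Fin m) (Fin n) F)} {w : ℕ}
    (h : ∀ A ∈ 𝒜, A.rank ≤ w) : maxrank 𝒜 ≤ w := by
  refine csSup_le ⟨0, 0, 𝒜.zero_mem, Matrix.rank_zero⟩ ?_
  rintro x ⟨B, hB, rfl⟩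
  exact h B hB

/-- If a square submatrix of `B` equals `c • 1` with `c ≠ 0` then `B.rank ≥ w`. -/
lemma le_rank_of_submatrix {m n w : ℕ} (B : Matrix (Fin m) (Fin n) F)
    (f : Fin w → Fin m) (g : Fin w → Fin n) (c : F) (hc : c ≠ 0)
    (h : B.submatrix f g = c • (1 : Matrix (Fin w) (Fin w) F)) : w ≤ B.rank := by
  classical
  set P : Matrix (Fin w) (Fin m) F := Matrix.of fun j p => if f j = p then (1:F) else 0 with hP
  set Q : Matrix (Fin n) (Fin w) F := Matrix.of fun p j => if g j = p then (1:F) else 0 with hQ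
  have hfac : P * B * Q = B.submatrix f g := by
    ext j j'
    simp [Matrix.mul_apply, hP, hQ, Finset.sum_ite_eq, ite_and, mul_ite,
      Finset.mul_sum, Finset.sum_ite_eq']
  have hunit : IsUnit (c • (1 : Matrix (Fin w) (Fin w) F)) := by
    rw [Matrix.isUnit_iff_isUnit_det, Matrix.det_smul, Matrix.det_one, mul_one,
      Fintype.card_fin]
    exact (isUnit_iff_ne_zero.mpr hc).pow w
  have hrank : (c • (1 : Matrix (Fin w) (Fin w) F)).rank = w := by
    rw [Matrix.rank_of_isUnit _ hunit, Fintype.card_fin]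
  calc w = (P * B * Q).rank := by rw [hfac, h, hrank]
    _ ≤ (P * B).rank := Matrix.rank_mul_le_left _ _
    _ ≤ B.rank := Matrix.rank_mul_le_right _ _

/-- Matrices supported on the first `w` columns. -/
def colAnticode (F : Type*) [Field F] (m n w : ℕ) : Submodule F (Matrix (Fin m) (Fin n) F) where
  carrier := {A | ∀ (p : Fin m) (c : Fin n), w ≤ (c : ℕ) → A p c = 0}
  add_mem' := by
    intro A B hA hB p c hc
    simp [Matrix.add_apply, hA p c hc, hB p c hc]
  zero_mem' := by intro p c hc; rfl
  smul_mem' := by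
    intro a A hA p c hc
    simp [Matrix.smul_apply, hA p c hc]

lemma mem_colAnticode {m n w : ℕ} {A : Matrix (Fin m) (Fin n) F} :
    A ∈ colAnticode F m n w ↔ ∀ (p : Fin m) (c : Fin n), w ≤ (c : ℕ) → A p c = 0 := Iff.rfl

noncomputable def extendCols (F : Type*) [Field F] (m n w : ℕ) :
    Matrix (Fin m) (Fin w) F →ₗ[F] Matrix (Fin m) (Fin n) F where
  toFun M := Matrix.of fun p c => if h : (c : ℕ) < w then M p ⟨c, h⟩ else 0
  map_add' M N := by ext p c; simp only [Matrix.of_apply, Matrix.add_apply]; split <;> simp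
  map_smul' a M := by ext p c; simp only [Matrix.of_apply, Matrix.smul_apply]; split <;> simp

lemma range_extendCols {m n w : ℕ} (hwn : w ≤ n) :
    LinearMap.range (extendCols F m n w) = colAnticode F m n w := by
  ext A
  constructor
  · rintro ⟨M, rfl⟩ p c hc
    simp [extendCols, Nat.not_lt.mpr hc]
  · intro hA
    refine ⟨Matrix.of fun p j => A p ⟨j.1, lt_of_lt_of_le j.2 hwn⟩, ?_⟩
    ext p c
    simp only [extendCols, LinearMap.coe_mk, AddHom.coe_mk, Matrix.of_apply]
    split
    · rfl
    · exact (hA p c (Nat.not_lt.mp ‹_›)).symm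

lemma injective_extendCols {m n w : ℕ} (hwn : w ≤ n) :
    Function.Injective (extendCols F m n w) := by
  intro M N h
  ext p j
  have := congrFun (congrFun (congrArg (fun X => (X : Matrix (Fin m) (Fin n) F)) h) p)
    ⟨j.1, lt_of_lt_of_le j.2 hwn⟩
  simpa [extendCols, j.2] using this

lemma finrank_colAnticode {m n w : ℕ} (hwn : w ≤ n) :
    finrank F (colAnticode F m n w) = m * w := by
  rw [← range_extendCols hwn, LinearMap.finrank_range_of_inj (injective_extendCols hwn)]
  simp [Module.finrank_matrix]

lemma rank_le_of_mem_colAnticode {m n w : ℕ} {A : Matrix (Fin m) (Fin n) F}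
    (hA : A ∈ colAnticode F m n w) : A.rank ≤ w := by
  classical
  set P : Matrix (Fin m) (Fin w) F :=
    Matrix.of fun p j => if h : (j : ℕ) < n then A p ⟨j, h⟩ else 0 with hP
  set Q : Matrix (Fin w) (Fin n) F :=
    Matrix.of fun j c => if (j : ℕ) = (c : ℕ) then (1:F) else 0 with hQ
  have hfac : P * Q = A := by
    ext p c
    rw [Matrix.mul_apply]
    by_cases hc : (c : ℕ) < w
    · rw [Finset.sum_eq_single ⟨(c : ℕ), hc⟩]
      · simp [hP, hQ, c.2]
      · intro j _ hj
        have : (j : ℕ) ≠ (c : ℕ) := fun h => hj (Fin.ext h)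
        simp [hQ, this]
      · simp
    · rw [hA p c (Nat.not_lt.mp hc)]
      apply Finset.sum_eq_zero
      intro j _
      have : (j : ℕ) ≠ (c : ℕ) := by
        intro h; exact hc (h ▸ j.2)
      simp [hQ, this]
  calc A.rank = (P * Q).rank := by rw [hfac]
    _ ≤ P.rank := Matrix.rank_mul_le_left _ _
    _ ≤ w := P.rank_le_width

/-- The partial identity matrix of rank `w`. -/
def partialId (F : Type*) [Field F] (m n w : ℕ) : Matrix (Fin m) (Fin n) F :=
  Matrix.of fun p c => if (p : ℕ) = (c : ℕ) ∧ (c : ℕ) < w then (1:F) else 0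

lemma partialId_mem_colAnticode {m n w : ℕ} : partialId F m n w ∈ colAnticode F m n w := by
  intro p c hc
  simp [partialId, Nat.not_lt.mpr hc]

lemma le_rank_partialId {m n w : ℕ} (hwm : w ≤ m) (hwn : w ≤ n) :
    w ≤ (partialId F m n w).rank := by
  refine le_rank_of_submatrix _ (fun j => ⟨j.1, lt_of_lt_of_le j.2 hwm⟩)
    (fun j => ⟨j.1, lt_of_lt_of_le j.2 hwn⟩) 1 one_ne_zero ?_
  ext j j'
  by_cases h : j = j'
  · subst h; simp [partialId, Matrix.one_apply, j.2]
  · have : (j : ℕ) ≠ (j' : ℕ) := fun hh => h (Fin.ext hh)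
    simp [partialId, Matrix.one_apply, h, this]

lemma maxrank_colAnticode {m n w : ℕ} (hwm : w ≤ m) (hwn : w ≤ n) :
    maxrank (colAnticode F m n w) = w := by
  refine le_antisymm (maxrank_le fun A hA => rank_le_of_mem_colAnticode hA) ?_
  calc w ≤ (partialId F m n w).rank := le_rank_partialId hwm hwn
    _ ≤ maxrank (colAnticode F m n w) := rank_le_maxrank partialId_mem_colAnticode

lemma isOptAnticode_colAnticode {m n w : ℕ} (hwm : w ≤ m) (hwn : w ≤ n) :
    IsOptAnticode (colAnticode F m n w) := by
  rw [IsOptAnticode, maxrank_colAnticode hwm hwn, finrank_colAnticode hwn]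

lemma colAnticode_width_eq_top {m n : ℕ} : colAnticode F m n n = ⊤ := by
  refine eq_top_iff.mpr fun A _ p c hc => absurd c.2 (Nat.not_lt.mpr hc)

lemma isOptAnticode_top {m n : ℕ} (hnm : n ≤ m) :
    IsOptAnticode (⊤ : Submodule F (Matrix (Fin m) (Fin n) F)) := by
  rw [← colAnticode_width_eq_top]
  exact isOptAnticode_colAnticode hnm le_rfl

lemma maxrank_top {m n : ℕ} (hnm : n ≤ m) :
    maxrank (⊤ : Submodule F (Matrix (Fin m) (Fin n) F)) = n := by
  rw [← colAnticode_width_eq_top]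
  exact maxrank_colAnticode hnm le_rfl

end Aux

/-- Any non-decreasing sequence of positive integers `d_1 ≤ ⋯ ≤ d_k` is the sequence of
generalized rank weights of a `k`-dimensional rank-metric code in `F_q^{m×n}`, where
`m = d_1 + ⋯ + d_k` and `n = d_k`. -/
theorem exists_rank_metric_code_with_grws {k : ℕ} (hk : 0 < k)
    (d : Fin k → ℕ) (hmono : Monotone d) (hpos : ∀ r, 1 ≤ d r) :
    ∃ 𝒞 : Submodule F (Matrix (Fin (∑ r, d r)) (Fin (d ⟨k - 1, Nat.sub_lt hk Nat.one_pos⟩)) F),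
      Module.finrank F 𝒞 = k ∧ ∀ r : Fin k, grw 𝒞 (r.1 + 1) = d r := by
  classical
  set m := ∑ r, d r with hm
  set last : Fin k := ⟨k - 1, Nat.sub_lt hk Nat.one_pos⟩ with hlast
  set n := d last with hn
  have hle_last : ∀ i : Fin k, i ≤ last := fun i => by
    rw [Fin.le_def]
    have := i.2
    simp only [hlast]
    omega
  have hdn : ∀ i, d i ≤ n := fun i => hmono (hle_last i)
  have hnm : n ≤ m := Finset.single_le_sum (f := d) (fun i _ => Nat.zero_le _)
    (Finset.mem_univ last)
  have hdm : ∀ i, d i ≤ m := fun i => (hdn i).trans hnm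
  have hcard : Fintype.card ((i : Fin k) × Fin (d i)) = m := by simp [hm]
  set row : ((i : Fin k) × Fin (d i)) ≃ Fin m := Fintype.equivFinOfCardEq hcard with hrow
  set A : Fin k → Matrix (Fin m) (Fin n) F := fun i =>
    Matrix.of fun p c =>
      if (row.symm p).1 = i ∧ ((row.symm p).2 : ℕ) = (c : ℕ) then 1 else 0 with hA
  -- evaluation of the generators
  have hA_apply : ∀ (i i' : Fin k) (j : Fin (d i')) (c : Fin n),
      A i (row ⟨i', j⟩) c = if i' = i ∧ (j : ℕ) = (c : ℕ) then 1 else 0 := by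
    intro i i' j c
    have hx : row.symm (row ⟨i', j⟩) = ⟨i', j⟩ := row.symm_apply_apply _
    simp only [hA, Matrix.of_apply]
    rw [hx]
  -- column support
  have hA_mem : ∀ i, A i ∈ colAnticode F m n (d i) := by
    intro i p c hc
    simp only [hA, Matrix.of_apply]
    rw [if_neg]
    rintro ⟨h1, h2⟩
    have h3 := (row.symm p).2.2
    have h4 := congrArg d h1
    omega
  -- detector entries
  have hA_det : ∀ i j : Fin k,
      A j (row ⟨i, ⟨0, hpos i⟩⟩) (⟨0, hpos last⟩ : Fin n) = if i = j then 1 else 0 := by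
    intro i j
    rw [hA_apply]
    simp
  -- entries of linear combinations
  have hsum_apply : ∀ (c : Fin k → F) (p : Fin m) (q : Fin n),
      (∑ j, c j • A j) p q = ∑ j, c j * A j p q := by
    intro c p q
    rw [Matrix.sum_apply]
    simp [Matrix.smul_apply]
  -- linear independence of the generators
  have hA_li : LinearIndependent F A := by
    rw [Fintype.linearIndependent_iff]
    intro g hg i
    have h0 := congrFun (congrFun hg (row ⟨i, ⟨0, hpos i⟩⟩)) (⟨0, hpos last⟩ : Fin n)
    have h1 : (∑ j, g j • A j) (row ⟨i, ⟨0, hpos i⟩⟩) (⟨0, hpos last⟩ : Fin n) = g i := by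
      rw [hsum_apply]
      simp [hA_det, mul_ite, Finset.sum_ite_eq]
    rw [h1] at h0
    simpa using h0
  -- coefficient extraction
  set 𝒞 : Submodule F (Matrix (Fin m) (Fin n) F) := Submodule.span F (Set.range A) with h𝒞
  have hcoeff : ∀ B ∈ 𝒞, ∃ c : Fin k → F, ∑ i, c i • A i = B ∧
      ∀ i, B (row ⟨i, ⟨0, hpos i⟩⟩) (⟨0, hpos last⟩ : Fin n) = c i := by
    intro B hB
    obtain ⟨c, hc⟩ := (Submodule.mem_span_range_iff_exists_fun F).mp hB
    refine ⟨c, hc, fun i => ?_⟩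
    rw [← hc, hsum_apply]
    simp [hA_det, mul_ite, Finset.sum_ite_eq]
  -- rank lower bound for combinations
  have hrank_combo : ∀ (c : Fin k → F) (i : Fin k), c i ≠ 0 →
      d i ≤ (∑ j, c j • A j).rank := by
    intro c i hci
    refine le_rank_of_submatrix _ (fun j => row ⟨i, j⟩)
      (fun j => ⟨j.1, lt_of_lt_of_le j.2 (hdn i)⟩) (c i) hci ?_
    ext j j'
    rw [Matrix.submatrix_apply, hsum_apply]
    have hAj : ∀ l : Fin k, A l (row ⟨i, j⟩) (⟨j'.1, lt_of_lt_of_le j'.2 (hdn i)⟩ : Fin n)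
        = if i = l ∧ (j : ℕ) = (j' : ℕ) then 1 else 0 := fun l => hA_apply l i j _
    simp only [hAj]
    by_cases hjj : (j : ℕ) = (j' : ℕ)
    · have : j = j' := Fin.ext hjj
      subst this
      simp [Matrix.one_apply, mul_ite, Finset.sum_ite_eq]
    · have : j ≠ j' := fun h => hjj (congrArg Fin.val h)
      simp [Matrix.one_apply, hjj, this]
  -- rank of a single generator
  have hA_rank : ∀ i : Fin k, d i ≤ (A i).rank := by
    intro i
    have h1 : (∑ j, (if j = i then (1:F) else 0) • A j) = A i := by
      simp [ite_smul]
    have := hrank_combo (fun j => if j = i then (1:F) else 0) i (by simp)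
    rwa [h1] at this
  -- generic lower bound for rkWt
  have hwt_nonempty : ∀ 𝒟 : Submodule F (Matrix (Fin m) (Fin n) F),
      {w | ∃ 𝒜 : Submodule F (Matrix (Fin m) (Fin n) F),
        IsOptAnticode 𝒜 ∧ 𝒟 ≤ 𝒜 ∧ maxrank 𝒜 = w}.Nonempty :=
    fun 𝒟 => ⟨n, ⊤, isOptAnticode_top hnm, le_top, maxrank_top hnm⟩
  have hrkWt_ge : ∀ (𝒟 : Submodule F (Matrix (Fin m) (Fin n) F)) (B : Matrix (Fin m) (Fin n) F),
      B ∈ 𝒟 → ∀ w, w ≤ B.rank → w ≤ rkWt 𝒟 := by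
    intro 𝒟 B hB w hw
    refine le_csInf (hwt_nonempty 𝒟) ?_
    rintro x ⟨𝒜, -, h𝒟𝒜, rfl⟩
    exact hw.trans (rank_le_maxrank (h𝒟𝒜 hB))
  refine ⟨𝒞, ?_, ?_⟩
  · rw [h𝒞, finrank_span_eq_card hA_li, Fintype.card_fin]
  intro r
  have hr1 : r.1 + 1 ≤ k := r.2
  set emb : Fin (r.1 + 1) → Fin k := Fin.castLE hr1 with hemb
  set 𝒟r : Submodule F (Matrix (Fin m) (Fin n) F) :=
    Submodule.span F (Set.range (A ∘ emb)) with h𝒟r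
  have h𝒟r𝒞 : 𝒟r ≤ 𝒞 := Submodule.span_mono (Set.range_comp_subset_range emb A)
  have h𝒟r_rank : finrank F 𝒟r = r.1 + 1 := by
    rw [h𝒟r, finrank_span_eq_card (hA_li.comp emb (Fin.castLE_injective hr1)),
      Fintype.card_fin]
  have h𝒟r_sub : 𝒟r ≤ colAnticode F m n (d r) := by
    rw [h𝒟r, Submodule.span_le]
    rintro _ ⟨t, rfl⟩
    intro p c hc
    refine hA_mem (emb t) p c (le_trans ?_ hc)
    refine hmono ?_
    rw [Fin.le_def]
    exact Nat.lt_succ_iff.mp t.2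
  have hAr_mem : A r ∈ 𝒟r := by
    refine Submodule.subset_span ⟨⟨r.1, Nat.lt_succ_self _⟩, ?_⟩
    simp [hemb, Function.comp]
  have hwt𝒟r : rkWt 𝒟r = d r := by
    refine le_antisymm (csInf_le' ⟨colAnticode F m n (d r),
      isOptAnticode_colAnticode (hdm r) (hdn r), h𝒟r_sub,
      maxrank_colAnticode (hdm r) (hdn r)⟩) ?_
    exact hrkWt_ge 𝒟r (A r) hAr_mem (d r) (hA_rank r)
  have hmem : d r ∈ {w | ∃ 𝒟 : Submodule F (Matrix (Fin m) (Fin n) F),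
      𝒟 ≤ 𝒞 ∧ r.1 + 1 ≤ finrank F 𝒟 ∧ rkWt 𝒟 = w} :=
    ⟨𝒟r, h𝒟r𝒞, le_of_eq h𝒟r_rank.symm, hwt𝒟r⟩
  have hlb : ∀ w ∈ {w | ∃ 𝒟 : Submodule F (Matrix (Fin m) (Fin n) F),
      𝒟 ≤ 𝒞 ∧ r.1 + 1 ≤ finrank F 𝒟 ∧ rkWt 𝒟 = w}, d r ≤ w := by
    rintro w ⟨𝒟, h𝒟𝒞, hfin, rfl⟩
    -- there is an element of 𝒟 with a nonzero coefficient at index ≥ r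
    have hex : ∃ B ∈ 𝒟, ∃ i : Fin k, r ≤ i ∧ d i ≤ B.rank := by
      by_contra hcon
      push_neg at hcon
      have hsmall : 𝒟 ≤ Submodule.span F (Set.range (A ∘ Fin.castLE (le_of_lt r.2))) := by
        intro B hB
        obtain ⟨c, hcB, -⟩ := hcoeff B (h𝒟𝒞 hB)
        have hzero : ∀ i : Fin k, r ≤ i → c i = 0 := by
          intro i hi
          by_contra hci
          have := hrank_combo c i hci
          rw [hcB] at this
          exact absurd this (Nat.not_le.mpr (hcon B hB i hi))
        refine (Submodule.mem_span_range_iff_exists_fun F).mpr ⟨c ∘ Fin.castLE (le_of_lt r.2), ?_⟩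
        rw [← hcB]
        have hfilter : (Finset.univ.filter (fun i : Fin k => (i : ℕ) < r.1)) =
            Finset.univ.image (Fin.castLE (le_of_lt r.2)) := by
          ext i
          simp only [Finset.mem_filter, Finset.mem_univ, true_and, Finset.mem_image]
          constructor
          · intro h
            exact ⟨⟨i.1, h⟩, Fin.ext rfl⟩
          · rintro ⟨t, rfl⟩
            exact t.2
        calc ∑ t : Fin r.1, (c ∘ Fin.castLE (le_of_lt r.2)) t • (A ∘ Fin.castLE (le_of_lt r.2)) t
            = ∑ i ∈ Finset.univ.image (Fin.castLE (le_of_lt r.2)), c i • A i := by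
              rw [Finset.sum_image (fun x _ y _ h => Fin.castLE_injective _ h)]
              rfl
          _ = ∑ i ∈ Finset.univ.filter (fun i : Fin k => (i : ℕ) < r.1), c i • A i := by
              rw [hfilter]
          _ = ∑ i : Fin k, c i • A i := by
              refine Finset.sum_filter_of_ne ?_
              intro i _ hne
              by_contra hge
              exact hne (by rw [hzero i (Fin.le_def.mpr (Nat.not_lt.mp hge))]; simp)
      have h1 : finrank F 𝒟 ≤ r.1 := by
        calc finrank F 𝒟
            ≤ finrank F (Submodule.span F (Set.range (A ∘ Fin.castLE (le_of_lt r.2)))) :=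
              Submodule.finrank_mono hsmall
          _ = r.1 := by
              rw [finrank_span_eq_card (hA_li.comp _ (Fin.castLE_injective _)),
                Fintype.card_fin]
      omega
    obtain ⟨B, hB𝒟, i, hri, hBrank⟩ := hex
    exact hrkWt_ge 𝒟 B hB𝒟 (d r) ((hmono hri).trans hBrank)
  exact le_antisymm (csInf_le' hmem) (le_csInf ⟨_, hmem⟩ hlb)
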